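/- Fix a ≥ 0, b ≥ 0, and let f : ℝ² → ℝ be measurable with 0 ≤ f(k) ≤ 1 for all k, not almost everywhere equal to 0, and such that k ↦ ε(k)·f(k) is integrable over ℝ². Then the map μ ↦ ∫_{ℝ²} λ(ε(k), exp(−μ/k_BT); a, b; f(k)) dk is strictly increasing on ℝ. -/

import Mathlib

/-- `ψ(ε,ξ;a,b) = (a+1)(ε+b)/(1 + ξ·e^{(ε+b)/k_BT}) + a[ε−b]₊/(1 + ξ·e^{[ε−b]₊/k_BT})`. -/
noncomputable def psi (kBT ε ξ a b : ℝ) : ℝ :=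
  (a + 1) * (ε + b) / (1 + ξ * Real.exp ((ε + b) / kBT)) +
    a * max (ε - b) 0 / (1 + ξ * Real.exp (max (ε - b) 0 / kBT))

/-- `λ(ε,ξ;a,b;φ) = ψ(ε,ξ;a,b)·(1 − φ·(1 + ξ·e^{ε/k_BT}))`. -/
noncomputable def lam (kBT ε ξ a b φ : ℝ) : ℝ :=
  psi kBT ε ξ a b * (1 - φ * (1 + ξ * Real.exp (ε / kBT)))

/-!
Write `ξ = exp (-μ / k_BT)`. For `φ ∈ [0, 1]` and `E, B > 0` the ratio
`(1 - φ (1 + ξ E)) / (1 + ξ B)` is strictly decreasing in `ξ > 0`, and `λ` is a combination of two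
such ratios with nonnegative coefficients, the first one `(a + 1)(ε + b)` positive as soon as
`k ≠ 0`. So off the null set `{0}` the integrand increases strictly with `μ`, and it remains to see
that it is integrable: `|λ| ≤ C (ε + b) (exp (-ε / k_BT) / ξ + φ)`, where the exponential part is
integrable over the plane and the `φ` part because `φ ≤ 1` and `ε φ` is integrable.
-/

open MeasureTheory Set Real

lemma strictAntiOn_one_sub_mul_div {φ E B : ℝ} (hφ0 : 0 ≤ φ) (hφ1 : φ ≤ 1) (hE : 0 < E)
    (hB : 0 < B) : StrictAntiOn (fun ξ => (1 - φ * (1 + ξ * E)) / (1 + ξ * B)) (Ioi 0) := by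
  intro ξ₂ (hξ₂ : 0 < ξ₂) ξ₁ (hξ₁ : 0 < ξ₁) hlt
  rw [div_lt_div_iff₀ (by positivity) (by positivity)]
  -- cross-multiplied, the difference is `(ξ₁ - ξ₂) * ((1 - φ) * B + φ * E)`
  have hpos : 0 < (1 - φ) * B + φ * E := by
    rcases hφ1.lt_or_eq with h | rfl
    · nlinarith [mul_nonneg hφ0 hE.le]
    · simpa using hE
  nlinarith [mul_pos (sub_pos.mpr hlt) hpos]

lemma lam_eq_add (T ε ξ a b φ : ℝ) :
    lam T ε ξ a b φ =
      (a + 1) * (ε + b) * ((1 - φ * (1 + ξ * exp (ε / T))) / (1 + ξ * exp ((ε + b) / T))) +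
        a * max (ε - b) 0 *
          ((1 - φ * (1 + ξ * exp (ε / T))) / (1 + ξ * exp (max (ε - b) 0 / T))) := by
  unfold lam psi; ring

lemma lam_strictAntiOn {T ε a b φ : ℝ} (ha : 0 ≤ a) (hεb : 0 < ε + b) (hφ0 : 0 ≤ φ)
    (hφ1 : φ ≤ 1) : StrictAntiOn (fun ξ => lam T ε ξ a b φ) (Ioi 0) := by
  intro ξ₂ hξ₂ ξ₁ hξ₁ hlt
  simp only [lam_eq_add]
  have hE := exp_pos (ε / T)
  have ratio_lt (B : ℝ) := strictAntiOn_one_sub_mul_div hφ0 hφ1 hE (exp_pos B) hξ₂ hξ₁ hlt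
  exact add_lt_add_of_lt_of_le (mul_lt_mul_of_pos_left (ratio_lt _) (by positivity))
    (mul_le_mul_of_nonneg_left (ratio_lt _).le (by positivity))

lemma psi_nonneg {T ε ξ a b : ℝ} (hξ : 0 ≤ ξ) (ha : 0 ≤ a) (hε : 0 ≤ ε) (hb : 0 ≤ b) :
    0 ≤ psi T ε ξ a b := by
  unfold psi; positivity

lemma psi_le {T ε ξ a b : ℝ} (hT : 0 ≤ T) (hξ : 0 ≤ ξ) (ha : 0 ≤ a) (hε : 0 ≤ ε)
    (hb : 0 ≤ b) : psi T ε ξ a b ≤ (2 * a + 1) * (ε + b) / (1 + ξ * exp ((ε - b) / T)) := by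
  have hm : max (ε - b) 0 ≤ ε + b := max_le (by linarith) (by linarith)
  calc psi T ε ξ a b
      ≤ (a + 1) * (ε + b) / (1 + ξ * exp ((ε - b) / T)) +
          a * (ε + b) / (1 + ξ * exp ((ε - b) / T)) := by
        unfold psi
        gcongr
        · linarith
        · exact le_max_left _ _
    _ = _ := by ring

lemma abs_lam_le {T ε ξ a b φ : ℝ} (hT : 0 ≤ T) (hξ : 0 < ξ) (ha : 0 ≤ a) (hε : 0 ≤ ε)
    (hb : 0 ≤ b) (hφ0 : 0 ≤ φ) (hφ1 : φ ≤ 1) :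
    |lam T ε ξ a b φ| ≤ (2 * a + 1) * exp (b / T) * ((ε + b) * (exp (-ε / T) / ξ + φ)) := by
  set D := 1 + ξ * exp ((ε - b) / T)
  have hD : 0 < D := by positivity
  have hsplit : exp (ε / T) = exp ((ε - b) / T) * exp (b / T) := by
    rw [← exp_add]; ring_nf
  have hfactor : |1 - φ * (1 + ξ * exp (ε / T))| ≤ 1 + φ * (ξ * exp (ε / T)) := by
    have : 0 ≤ φ * (ξ * exp (ε / T)) := by positivity
    rw [abs_le]; constructor <;> nlinarith
  have hinv : 1 / D ≤ exp (b / T) * exp (-ε / T) / ξ := by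
    have hcancel : exp (b / T + -ε / T) * exp ((ε - b) / T) = 1 := by
      rw [← exp_add, ← exp_zero]; ring_nf
    rw [div_le_div_iff₀ hD hξ, one_mul, ← exp_add]
    nlinarith [exp_pos (b / T + -ε / T)]
  have hocc : ξ * exp (ε / T) / D ≤ exp (b / T) := by
    rw [div_le_iff₀ hD, hsplit]
    nlinarith [exp_pos (b / T)]
  calc |lam T ε ξ a b φ|
      = psi T ε ξ a b * |1 - φ * (1 + ξ * exp (ε / T))| := by
        rw [lam, abs_mul, abs_of_nonneg (psi_nonneg hξ.le ha hε hb)]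
    _ ≤ (2 * a + 1) * (ε + b) / D * (1 + φ * (ξ * exp (ε / T))) :=
        mul_le_mul (psi_le hT hξ.le ha hε hb) hfactor (abs_nonneg _) (by positivity)
    _ = (2 * a + 1) * (ε + b) * (1 / D + φ * (ξ * exp (ε / T) / D)) := by ring
    _ ≤ (2 * a + 1) * (ε + b) * (exp (b / T) * exp (-ε / T) / ξ + φ * exp (b / T)) := by
        gcongr
    _ = _ := by ring

lemma integral_pos_of_ae_pos {α : Type*} [MeasurableSpace α] {μ : Measure α} [NeZero μ]
    {f : α → ℝ} (hf : ∀ᵐ x ∂μ, 0 < f x) (hfi : Integrable f μ) : 0 < ∫ x, f x ∂μ := by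
  have hnull : μ (Function.support f)ᶜ = 0 := by
    rw [measure_eq_zero_iff_ae_notMem]
    filter_upwards [hf] with x hx
    simpa using hx.ne'
  rw [integral_pos_iff_support_of_nonneg_ae (hf.mono fun _ h => h.le) hfi,
    measure_congr (ae_eq_univ.2 hnull)]
  exact Measure.measure_univ_pos.2 (NeZero.ne μ)

lemma integrable_of_integrable_norm_mul {E : Type*} [NormedAddCommGroup E] [ProperSpace E]
    [MeasurableSpace E] [OpensMeasurableSpace E] {μ : Measure E} [IsFiniteMeasureOnCompacts μ]
    {f : E → ℝ} (hf : AEStronglyMeasurable f μ) (hf01 : ∀ x, 0 ≤ f x ∧ f x ≤ 1)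
    (h : Integrable (fun x => ‖x‖ * f x) μ) : Integrable f μ := by
  have hball : Integrable ((Metric.closedBall (0 : E) 1).indicator fun _ => (1 : ℝ)) μ :=
    (integrableOn_const (C := (1 : ℝ)) measure_closedBall_lt_top.ne).integrable_indicator
      Metric.isClosed_closedBall.measurableSet
  refine (hball.add h).mono' hf (ae_of_all _ fun x => ?_)
  obtain ⟨h0, h1⟩ := hf01 x
  rw [Real.norm_of_nonneg h0, Pi.add_apply]
  by_cases hx : ‖x‖ ≤ 1
  · rw [indicator_of_mem (by simpa using hx)]
    nlinarith [norm_nonneg x]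
  · rw [indicator_of_notMem (by simpa using hx)]
    nlinarith

section AddHaar

variable {E : Type*} [NormedAddCommGroup E] [NormedSpace ℝ E] [FiniteDimensional ℝ E]
  [MeasurableSpace E] [BorelSpace E] (μ : Measure E) [μ.IsAddHaarMeasure]

lemma integrable_pow_norm_mul_exp_neg_mul_norm [Nontrivial E] (n : ℕ) {c : ℝ} (hc : 0 < c) :
    Integrable (fun x : E => ‖x‖ ^ n * exp (-c * ‖x‖)) μ := by
  rw [integrable_fun_norm_addHaar μ (f := fun y => y ^ n * exp (-c * y))]
  have hs : (-1 : ℝ) < (Module.finrank ℝ E - 1 + n : ℕ) :=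
    neg_one_lt_zero.trans_le (Nat.cast_nonneg _)
  refine (integrableOn_rpow_mul_exp_neg_mul_rpow hs one_pos hc).congr_fun (fun y _ => ?_)
    measurableSet_Ioi
  dsimp only
  rw [rpow_natCast, rpow_one, smul_eq_mul, pow_add]
  ring

lemma integrable_lam [Nontrivial E] {T v a b ξ : ℝ} (hT : 0 < T) (hv : 0 < v) (ha : 0 ≤ a)
    (hb : 0 ≤ b) (hξ : 0 < ξ) {f : E → ℝ} (hf : Measurable f) (hf01 : ∀ k, 0 ≤ f k ∧ f k ≤ 1)
    (hint : Integrable (fun k => v * ‖k‖ * f k) μ) :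
    Integrable (fun k => lam T (v * ‖k‖) ξ a b (f k)) μ := by
  have hf_int : Integrable f μ := by
    refine integrable_of_integrable_norm_mul hf.aestronglyMeasurable hf01 ?_
    refine (hint.const_mul v⁻¹).congr (ae_of_all _ fun k => ?_)
    field_simp
  have hexp : Integrable (fun k => (v * ‖k‖ + b) * exp (-(v * ‖k‖) / T)) μ := by
    have hc : 0 < v / T := div_pos hv hT
    refine (((integrable_pow_norm_mul_exp_neg_mul_norm μ 1 hc).const_mul v).add
      ((integrable_pow_norm_mul_exp_neg_mul_norm μ 0 hc).const_mul b)).congr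
        (ae_of_all _ fun k => ?_)
    simp only [Pi.add_apply, pow_one, pow_zero]
    rw [show -(v * ‖k‖) / T = -(v / T) * ‖k‖ by ring]
    ring
  have hbound : Integrable (fun k => (2 * a + 1) * exp (b / T) *
      ((v * ‖k‖ + b) * (exp (-(v * ‖k‖) / T) / ξ + f k))) μ := by
    refine (((hexp.div_const ξ).add (hint.add (hf_int.const_mul b))).const_mul
      ((2 * a + 1) * exp (b / T))).congr (ae_of_all _ fun k => ?_)
    simp only [Pi.add_apply]
    ring
  have hmeas : Measurable fun k => lam T (v * ‖k‖) ξ a b (f k) := by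
    unfold lam psi; fun_prop
  refine hbound.mono' hmeas.aestronglyMeasurable (ae_of_all _ fun k => ?_)
  rw [Real.norm_eq_abs]
  exact abs_lam_le hT.le hξ ha (by positivity) hb (hf01 k).1 (hf01 k).2

end AddHaar

theorem lam_integral_strictMono_general
    (kBT hvF : ℝ) (hkBT : 0 < kBT) (hhvF : 0 < hvF)
    (a b : ℝ) (ha : 0 ≤ a) (hb : 0 ≤ b)
    (f : EuclideanSpace ℝ (Fin 2) → ℝ) (hfmeas : Measurable f)
    (hf01 : ∀ k, 0 ≤ f k ∧ f k ≤ 1)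
    (hint : Integrable (fun k => hvF * ‖k‖ * f k) volume) :
    StrictMono (fun μ => ∫ k : EuclideanSpace ℝ (Fin 2),
      lam kBT (hvF * ‖k‖) (Real.exp (-μ / kBT)) a b (f k)) := by
  intro μ₁ μ₂ hμ
  have hξ (μ : ℝ) : exp (-μ / kBT) ∈ Ioi 0 := exp_pos _
  have hξlt : exp (-μ₂ / kBT) < exp (-μ₁ / kBT) := by gcongr
  have hI (μ : ℝ) := integrable_lam volume hkBT hhvF ha hb (hξ μ) hfmeas hf01 hint
  rw [← sub_pos, ← integral_sub (hI μ₂) (hI μ₁)]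
  refine integral_pos_of_ae_pos ?_ ((hI μ₂).sub (hI μ₁))
  filter_upwards [(countable_singleton (0 : EuclideanSpace ℝ (Fin 2))).ae_notMem volume]
    with k hk
  have hεb : 0 < hvF * ‖k‖ + b := by
    have := norm_pos_iff.2 (show k ≠ 0 from hk)
    positivity
  exact sub_pos.2 (lam_strictAntiOn ha hεb (hf01 k).1 (hf01 k).2 (hξ _) (hξ _) hξlt)

/-- **Strict monotonicity of the collision integral in `μ`.** With `ε(k) = ħv_F·|k|`,
for `f : ℝ² → ℝ` measurable with values in `[0,1]`, not almost everywhere `0`, and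
with `k ↦ ε(k)·f(k)` integrable, the map
`μ ↦ ∫_{ℝ²} λ(ε(k), exp(−μ/k_BT); a, b; f(k)) dk` is strictly increasing on `ℝ`. -/
theorem lam_integral_strictMono
    (kBT hvF : ℝ) (hkBT : 0 < kBT) (hhvF : 0 < hvF)
    (a b : ℝ) (ha : 0 ≤ a) (hb : 0 ≤ b)
    (f : EuclideanSpace ℝ (Fin 2) → ℝ) (hfmeas : Measurable f)
    (hf01 : ∀ k, 0 ≤ f k ∧ f k ≤ 1)
    (hfne : ¬ (f =ᵐ[volume] 0))
    (hint : Integrable (fun k => hvF * ‖k‖ * f k) volume) :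
    StrictMono (fun μ => ∫ k : EuclideanSpace ℝ (Fin 2),
      lam kBT (hvF * ‖k‖) (Real.exp (-μ / kBT)) a b (f k)) :=
  lam_integral_strictMono_general kBT hvF hkBT hhvF a b ha hb f hfmeas hf01 hint
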